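/- Let α ∈ (0,1], λ > 0, c > 0 and t > 0. Then ∫_{-ct}^{ct} [ ct ∑_{k=1}^∞ (λ/(2^α c^α))^{2k} (c²t² - x²)^{αk-1}/(Γ(αk) Γ(αk+1)) + ∑_{k=0}^∞ (λ/(2^α c^α))^{2k+1} (c²t² - x²)^{αk+(α-1)/2}/Γ(αk + (1+α)/2)² ] dx = E_{α,1}(λ t^α) - 1. In particular, the law of the fractional telegraph process, obtained by dividing this absolutely continuous density by E_{α,1}(λ t^α) and adding a point mass 1/(2 E_{α,1}(λ t^α)) at each of the points ±ct, is a probability distribution on [-ct, ct]. -/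

import Mathlib

/-!
The substitution `x = L (2u - 1)` turns each power of `L² - x²` into a Beta integral,
`∫_{-L}^{L} (L² - x²)^(s-1) dx = (2L)^(2s-1) Γ(s)² / Γ(2s)`. With `L = ct` and
`q = λ / (2c)^α`, the `k`-th terms of the two series in the density therefore integrate to
the Mittag-Leffler terms `z^n / Γ(αn + 1)`, `z = λ t^α`, for `n = 2k + 2` and `n = 2k + 1`.
All terms are nonnegative, so summation and integration commute, and the total is
`E_{α,1}(z)` minus its term `n = 0`, which is `1`. The series converge by the ratio test,
since log-convexity of `Γ` gives `Γ(x) (x + α - 1)^α ≤ Γ(x + α)` for `α ≤ 1`.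
-/

open Real MeasureTheory

/-- Two-parameter Mittag-Leffler function `E_{a,b}(z) = ∑ z^k / Γ(ak+b)`. -/
noncomputable def ML (a b z : ℝ) : ℝ := ∑' k : ℕ, z ^ k / Real.Gamma (a * (k : ℝ) + b)

open Filter Set

theorem Real.Gamma_mul_rpow_le_Gamma_add {a x : ℝ} (ha : 0 < a) (ha1 : a ≤ 1)
    (hx : 0 < x + a - 1) : Gamma x * (x + a - 1) ^ a ≤ Gamma (x + a) := by
  set y := x + a - 1
  have hGy := Gamma_pos_of_pos hx
  have hxy : x + a = y + 1 := by ring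
  rw [hxy, Gamma_add_one hx.ne']
  rcases ha1.lt_or_eq with ha1 | rfl
  · have hconv := Gamma_mul_add_mul_le_rpow_Gamma_mul_rpow_Gamma hx (by linarith : 0 < y + 1)
      ha (by linarith : 0 < 1 - a) (by ring)
    rw [show a * y + (1 - a) * (y + 1) = x by ring, Gamma_add_one hx.ne',
      mul_rpow hx.le hGy.le] at hconv
    calc Gamma x * y ^ a ≤ Gamma y ^ a * (y ^ (1 - a) * Gamma y ^ (1 - a)) * y ^ a := by gcongr
      _ = y * Gamma y := by
        rw [mul_comm (y ^ (1 - a)), ← mul_assoc, ← rpow_add hGy, mul_assoc, ← rpow_add hx,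
          add_sub_cancel, sub_add_cancel, rpow_one, rpow_one, mul_comm]
  · simp only [rpow_one, show y = x by ring]
    rw [mul_comm]

theorem eventually_mul_Gamma_le_Gamma_add {a : ℝ} (ha : 0 < a) (ha1 : a ≤ 1) (b C : ℝ) :
    ∀ᶠ n : ℕ in atTop, C * Gamma (a * n + b) ≤ Gamma (a * n + b + a) := by
  have hlin : Tendsto (fun n : ℕ => a * n + b + a - 1) atTop atTop := by
    refine (tendsto_atTop_add_const_right _ (b + a - 1)
      (tendsto_natCast_atTop_atTop.const_mul_atTop ha)).congr fun n => ?_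
    ring
  filter_upwards [hlin.eventually_gt_atTop 0,
    ((tendsto_rpow_atTop ha).comp hlin).eventually_ge_atTop C] with n hpos hC
  have hGamma : 0 ≤ Gamma (a * n + b) := (Gamma_pos_of_pos (by linarith)).le
  calc C * Gamma (a * n + b) ≤ (a * n + b + a - 1) ^ a * Gamma (a * n + b) := by
        gcongr; exact hC
    _ ≤ Gamma (a * n + b + a) := by
        rw [mul_comm]; exact Gamma_mul_rpow_le_Gamma_add ha ha1 hpos

theorem summable_pow_div_of_eventually_two_mul_le {z : ℝ} (hz : 0 ≤ z) {G : ℕ → ℝ}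
    (hG : ∀ n, 0 < G n) (hratio : ∀ᶠ n in atTop, 2 * z * G n ≤ G (n + 1)) :
    Summable fun n => z ^ n / G n := by
  refine summable_of_ratio_norm_eventually_le (r := 1 / 2) (by norm_num) ?_
  filter_upwards [hratio] with n hn
  have hGn := hG n
  have hGn1 := hG (n + 1)
  rw [norm_of_nonneg (by positivity), norm_of_nonneg (by positivity), div_le_iff₀ hGn1]
  calc z ^ (n + 1) = 1 / 2 * (z ^ n / G n) * (2 * z * G n) := by field_simp; ring
    _ ≤ 1 / 2 * (z ^ n / G n) * G (n + 1) := by gcongr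

theorem summable_pow_div_Gamma {a b z : ℝ} (ha : 0 < a) (ha1 : a ≤ 1) (hb : 0 < b)
    (hz : 0 ≤ z) : Summable fun n : ℕ => z ^ n / Gamma (a * n + b) := by
  refine summable_pow_div_of_eventually_two_mul_le hz
    (fun n => Gamma_pos_of_pos (by positivity)) ?_
  filter_upwards [eventually_mul_Gamma_le_Gamma_add ha ha1 b (2 * z)] with n hn
  rwa [Nat.cast_succ, mul_add_one, add_right_comm]

theorem summable_pow_div_Gamma_mul_Gamma {a b₁ b₂ z : ℝ} (ha : 0 < a) (ha1 : a ≤ 1)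
    (hb₁ : 0 < b₁) (hb₂ : 0 < b₂) (hz : 0 ≤ z) :
    Summable fun n : ℕ => z ^ n / (Gamma (a * n + b₁) * Gamma (a * n + b₂)) := by
  refine summable_pow_div_of_eventually_two_mul_le hz
    (fun n => mul_pos (Gamma_pos_of_pos (by positivity)) (Gamma_pos_of_pos (by positivity))) ?_
  filter_upwards [eventually_mul_Gamma_le_Gamma_add ha ha1 b₁ (2 * z),
    eventually_mul_Gamma_le_Gamma_add ha ha1 b₂ 1] with n h₁ h₂
  rw [Nat.cast_succ, mul_add_one, add_right_comm, add_right_comm _ a b₂, ← mul_assoc]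
  exact mul_le_mul h₁ (by simpa using h₂) (Gamma_pos_of_pos (by positivity)).le
    (Gamma_pos_of_pos (by positivity)).le

theorem ofReal_rpow_mul_one_sub_rpow {s t u : ℝ} (hu : u ∈ uIcc 0 1) :
    ((u ^ (s - 1) * (1 - u) ^ (t - 1) : ℝ) : ℂ) =
      (u : ℂ) ^ ((s : ℂ) - 1) * (1 - (u : ℂ)) ^ ((t : ℂ) - 1) := by
  rw [uIcc_of_le zero_le_one] at hu
  push_cast [Complex.ofReal_cpow hu.1, Complex.ofReal_cpow (sub_nonneg.2 hu.2)]
  rfl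

theorem intervalIntegrable_rpow_mul_one_sub_rpow {s t : ℝ} (hs : 0 < s) (ht : 0 < t) :
    IntervalIntegrable (fun u => u ^ (s - 1) * (1 - u) ^ (t - 1)) volume 0 1 := by
  have h := Complex.betaIntegral_convergent (u := s) (v := t) (by simpa) (by simpa)
  rw [intervalIntegrable_iff] at h ⊢
  refine IntegrableOn.congr_fun h.re (fun u hu => ?_) measurableSet_uIoc
  rw [RCLike.re_to_complex, ← ofReal_rpow_mul_one_sub_rpow (uIoc_subset_uIcc hu),
    Complex.ofReal_re]

theorem integral_rpow_mul_one_sub_rpow {s t : ℝ} (hs : 0 < s) (ht : 0 < t) :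
    ∫ u in (0:ℝ)..1, u ^ (s - 1) * (1 - u) ^ (t - 1) = Gamma s * Gamma t / Gamma (s + t) := by
  have h := Complex.Gamma_mul_Gamma_eq_betaIntegral (s := s) (t := t) (by simpa) (by simpa)
  rw [Complex.betaIntegral,
    ← intervalIntegral.integral_congr fun u hu => ofReal_rpow_mul_one_sub_rpow hu,
    intervalIntegral.integral_ofReal, ← Complex.ofReal_add] at h
  simp only [Complex.Gamma_ofReal] at h
  norm_cast at h
  rw [h, mul_div_cancel_left₀ _ (Gamma_pos_of_pos (add_pos hs ht)).ne']

-- `u = x / (2L) + 1/2` maps `[-L, L]` onto `[0, 1]`, and `L² - x² = (2L)² u (1 - u)`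
theorem sq_sub_sq_rpow_eq {L s x : ℝ} (hL : 0 < L) (hx : x ∈ uIcc (-L) L) :
    (L ^ 2 - x ^ 2) ^ (s - 1) = (2 * L) ^ (2 * s - 2) *
      ((x / (2 * L) + 1 / 2) ^ (s - 1) * (1 - (x / (2 * L) + 1 / 2)) ^ (s - 1)) := by
  rw [uIcc_of_le (by linarith)] at hx
  have hu : 0 ≤ x / (2 * L) + 1 / 2 := by
    rw [div_add' _ _ _ (by positivity)]; apply div_nonneg <;> linarith [hx.1]
  have hu' : 0 ≤ 1 - (x / (2 * L) + 1 / 2) := by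
    rw [show 1 - (x / (2 * L) + 1 / 2) = (L - x) / (2 * L) by field_simp; ring]
    apply div_nonneg <;> linarith [hx.2]
  rw [← mul_rpow hu hu', show 2 * s - 2 = 2 * (s - 1) by ring, rpow_mul (by positivity), rpow_two,
    ← mul_rpow (by positivity) (mul_nonneg hu hu')]
  congr 1
  field_simp
  ring

theorem intervalIntegrable_sq_sub_sq_rpow {L s : ℝ} (hL : 0 < L) (hs : 0 < s) :
    IntervalIntegrable (fun x => (L ^ 2 - x ^ 2) ^ (s - 1)) volume (-L) L := by
  have h := ((intervalIntegrable_rpow_mul_one_sub_rpow hs hs).comp_add_right (1 / 2)).comp_mul_left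
    (c := (2 * L)⁻¹)
  have hB : IntervalIntegrable
      (fun x => (x / (2 * L) + 1 / 2) ^ (s - 1) * (1 - (x / (2 * L) + 1 / 2)) ^ (s - 1))
      volume (-L) L := by
    convert h using 1
    · simp only [div_eq_inv_mul]
    · field_simp; ring
    · field_simp; ring
  exact (hB.const_mul _).congr fun x hx => (sq_sub_sq_rpow_eq hL (uIoc_subset_uIcc hx)).symm

theorem integral_sq_sub_sq_rpow {L s : ℝ} (hL : 0 < L) (hs : 0 < s) :
    ∫ x in (-L)..L, (L ^ 2 - x ^ 2) ^ (s - 1) =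
      (2 * L) ^ (2 * s - 1) * Gamma s ^ 2 / Gamma (2 * s) := by
  rw [intervalIntegral.integral_congr (fun x hx => sq_sub_sq_rpow_eq (s := s) hL hx),
    intervalIntegral.integral_const_mul,
    intervalIntegral.integral_comp_div_add (f := fun u => u ^ (s - 1) * (1 - u) ^ (s - 1))
      (by positivity : 2 * L ≠ 0)]
  have h0 : -L / (2 * L) + 1 / 2 = 0 := by field_simp; ring
  have h1 : L / (2 * L) + 1 / 2 = 1 := by field_simp; ring
  rw [h0, h1, integral_rpow_mul_one_sub_rpow hs hs, smul_eq_mul, ← two_mul,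
    show 2 * s - 1 = 2 * s - 2 + 1 by ring, rpow_add_one (by positivity)]
  ring

theorem integral_mul_sq_sub_sq_rpow_div_Gamma_mul_Gamma {L s : ℝ} (hL : 0 < L) (hs : 0 < s) :
    ∫ x in (-L)..L, L * ((L ^ 2 - x ^ 2) ^ (s - 1) / (Gamma s * Gamma (s + 1))) =
      (2 * L) ^ (2 * s) / Gamma (2 * s + 1) := by
  have hΓs := (Gamma_pos_of_pos hs).ne'
  have hΓ2s := (Gamma_pos_of_pos (by positivity : 0 < 2 * s)).ne'
  rw [intervalIntegral.integral_const_mul, intervalIntegral.integral_div,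
    integral_sq_sub_sq_rpow hL hs, Gamma_add_one hs.ne',
    Gamma_add_one (by positivity : 2 * s ≠ 0)]
  have hpow : (2 * L) ^ (2 * s) = (2 * L) ^ (2 * s - 1) * (2 * L) := by
    rw [← rpow_add_one (by positivity), sub_add_cancel]
  rw [hpow]
  field_simp

theorem intervalIntegral_tsum_of_nonneg {f : ℕ → ℝ → ℝ} {a b : ℝ} (hab : a ≤ b)
    (hf : ∀ n, IntervalIntegrable (f n) volume a b)
    (hf₀ : ∀ n, ∀ x ∈ Ioc a b, 0 ≤ f n x)
    (hs : Summable fun n => ∫ x in a..b, f n x) :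
    ∫ x in a..b, ∑' n, f n x = ∑' n, ∫ x in a..b, f n x := by
  simp only [intervalIntegral.integral_of_le hab] at hs ⊢
  refine (integral_tsum_of_summable_integral_norm (fun n => (hf n).1) ?_).symm
  exact hs.congr fun n =>
    setIntegral_congr_fun measurableSet_Ioc fun x hx => (norm_of_nonneg (hf₀ n x hx)).symm

theorem Summable.hasSum_even_add_odd_succ {f : ℕ → ℝ} (hf : Summable f) :
    HasSum (fun k => f (2 * k + 2) + f (2 * k + 1)) (∑' n, f n - f 0) := by
  have hsucc : Summable fun n => f (n + 1) := (summable_nat_add_iff 1).2 hf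
  have hodd : Summable fun k => f (2 * k + 1) :=
    hsucc.comp_injective (mul_right_injective₀ (two_ne_zero' ℕ))
  have heven : Summable fun k => f (2 * k + 2) :=
    hsucc.comp_injective ((add_left_injective 1).comp (mul_right_injective₀ (two_ne_zero' ℕ)))
  convert heven.hasSum.add hodd.hasSum using 1
  rw [hf.tsum_eq_zero_add, add_sub_cancel_left, add_comm,
    ← tsum_even_add_odd (f := fun n => f (n + 1)) hodd heven]

section TelegraphDensity

variable {a q L : ℝ}

noncomputable def evenTerm (a q L : ℝ) (k : ℕ) (x : ℝ) : ℝ :=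
  q ^ (2 * (k + 1)) * (L ^ 2 - x ^ 2) ^ (a * ((k : ℝ) + 1) - 1) /
    (Gamma (a * ((k : ℝ) + 1)) * Gamma (a * ((k : ℝ) + 1) + 1))

noncomputable def oddTerm (a q L : ℝ) (k : ℕ) (x : ℝ) : ℝ :=
  q ^ (2 * k + 1) * (L ^ 2 - x ^ 2) ^ (a * (k : ℝ) + (a - 1) / 2) /
    Gamma (a * (k : ℝ) + (1 + a) / 2) ^ 2

/-- The absolutely continuous part of the law of the fractional telegraph process, with
`q = λ / (2c)^α` and `L = ct`. -/
noncomputable def telegraphDensity (a q L x : ℝ) : ℝ :=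
  L * ∑' k, evenTerm a q L k x + ∑' k, oddTerm a q L k x

theorem evenTerm_nonneg (ha : 0 < a) (hq : 0 ≤ q) (k : ℕ) {x : ℝ} (hx : x ∈ Icc (-L) L) :
    0 ≤ evenTerm a q L k x := by
  have hw : 0 ≤ L ^ 2 - x ^ 2 := by nlinarith [hx.1, hx.2]
  unfold evenTerm
  have := Gamma_pos_of_pos (by positivity : 0 < a * ((k : ℝ) + 1))
  have := Gamma_pos_of_pos (by positivity : 0 < a * ((k : ℝ) + 1) + 1)
  positivity

theorem oddTerm_nonneg (hq : 0 ≤ q) (k : ℕ) {x : ℝ} (hx : x ∈ Icc (-L) L) :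
    0 ≤ oddTerm a q L k x := by
  have hw : 0 ≤ L ^ 2 - x ^ 2 := by nlinarith [hx.1, hx.2]
  unfold oddTerm
  positivity

theorem rpow_mul_natCast_add {w : ℝ} (hw : 0 < w) (a e : ℝ) (k : ℕ) :
    w ^ (a * k + e) = (w ^ a) ^ k * w ^ e := by
  rw [rpow_add hw, rpow_mul_natCast hw.le]

theorem summable_evenTerm (ha : 0 < a) (ha1 : a ≤ 1) {x : ℝ} (hx : x ∈ Ioo (-L) L) :
    Summable fun k => evenTerm a q L k x := by
  have hw : 0 < L ^ 2 - x ^ 2 := by nlinarith [hx.1, hx.2]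
  refine ((summable_pow_div_Gamma_mul_Gamma ha ha1 ha (by linarith : 0 < a + 1)
    (by positivity : 0 ≤ q ^ 2 * (L ^ 2 - x ^ 2) ^ a)).mul_left
      (q ^ 2 * (L ^ 2 - x ^ 2) ^ (a - 1))).congr fun k => ?_
  rw [evenTerm, show a * ((k : ℝ) + 1) - 1 = a * k + (a - 1) by ring, rpow_mul_natCast_add hw,
    show a * ((k : ℝ) + 1) = a * k + a by ring, add_assoc]
  ring

theorem summable_oddTerm (ha : 0 < a) (ha1 : a ≤ 1) {x : ℝ} (hx : x ∈ Ioo (-L) L) :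
    Summable fun k => oddTerm a q L k x := by
  have hw : 0 < L ^ 2 - x ^ 2 := by nlinarith [hx.1, hx.2]
  refine ((summable_pow_div_Gamma_mul_Gamma ha ha1 (by linarith : 0 < (1 + a) / 2)
    (by linarith : 0 < (1 + a) / 2) (by positivity : 0 ≤ q ^ 2 * (L ^ 2 - x ^ 2) ^ a)).mul_left
      (q * (L ^ 2 - x ^ 2) ^ ((a - 1) / 2))).congr fun k => ?_
  rw [oddTerm, rpow_mul_natCast_add hw]
  ring

theorem intervalIntegrable_evenTerm (ha : 0 < a) (hL : 0 < L) (k : ℕ) :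
    IntervalIntegrable (fun x => L * evenTerm a q L k x) volume (-L) L :=
  (((intervalIntegrable_sq_sub_sq_rpow hL (by positivity)).const_mul _).div_const _).const_mul _

theorem intervalIntegrable_oddTerm (ha : 0 < a) (hL : 0 < L) (k : ℕ) :
    IntervalIntegrable (oddTerm a q L k) volume (-L) L := by
  unfold oddTerm
  rw [show a * (k : ℝ) + (a - 1) / 2 = a * k + (1 + a) / 2 - 1 by ring]
  exact ((intervalIntegrable_sq_sub_sq_rpow hL (by positivity)).const_mul _).div_const _

theorem integral_evenTerm (ha : 0 < a) (hL : 0 < L) (k : ℕ) :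
    ∫ x in (-L)..L, L * evenTerm a q L k x =
      (q * (2 * L) ^ a) ^ (2 * k + 2) / Gamma (a * ↑(2 * k + 2) + 1) := by
  simp only [evenTerm, mul_div_assoc, mul_left_comm L]
  rw [intervalIntegral.integral_const_mul, integral_mul_sq_sub_sq_rpow_div_Gamma_mul_Gamma hL
    (by positivity), mul_pow, ← rpow_mul_natCast (by positivity)]
  push_cast
  ring_nf

theorem integral_oddTerm (ha : 0 < a) (hL : 0 < L) (k : ℕ) :
    ∫ x in (-L)..L, oddTerm a q L k x =
      (q * (2 * L) ^ a) ^ (2 * k + 1) / Gamma (a * ↑(2 * k + 1) + 1) := by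
  simp only [oddTerm, mul_div_assoc,
    show a * (k : ℝ) + (a - 1) / 2 = a * k + (1 + a) / 2 - 1 by ring]
  rw [intervalIntegral.integral_const_mul, intervalIntegral.integral_div,
    integral_sq_sub_sq_rpow hL (by positivity), mul_pow, ← rpow_mul_natCast (by positivity)]
  have hΓ := (Gamma_pos_of_pos (by positivity : 0 < a * k + (1 + a) / 2)).ne'
  push_cast
  field_simp
  ring_nf

theorem one_le_ML (ha : 0 < a) (ha1 : a ≤ 1) {z : ℝ} (hz : 0 ≤ z) : 1 ≤ ML a 1 z := by
  have h := (summable_pow_div_Gamma ha ha1 one_pos hz).le_tsum 0 fun n _ => by positivity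
  simpa [ML] using h

theorem integral_telegraphDensity (ha : 0 < a) (ha1 : a ≤ 1) (hq : 0 ≤ q) (hL : 0 < L) :
    ∫ x in (-L)..L, telegraphDensity a q L x = ML a 1 (q * (2 * L) ^ a) - 1 := by
  have hpair : EqOn (telegraphDensity a q L)
      (fun x => ∑' k, (L * evenTerm a q L k x + oddTerm a q L k x)) (Ioo (-L) L) := fun x hx => by
    rw [telegraphDensity, ← tsum_mul_left]
    exact (((summable_evenTerm ha ha1 hx).mul_left L).tsum_add (summable_oddTerm ha ha1 hx)).symm
  have hML := summable_pow_div_Gamma ha ha1 one_pos (by positivity : 0 ≤ q * (2 * L) ^ a)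
  have hint k : ∫ x in (-L)..L, (L * evenTerm a q L k x + oddTerm a q L k x) = _ :=
    (intervalIntegral.integral_add (intervalIntegrable_evenTerm ha hL k)
      (intervalIntegrable_oddTerm ha hL k)).trans
      (congrArg₂ (· + ·) (integral_evenTerm ha hL k) (integral_oddTerm ha hL k))
  have hsum : HasSum (fun k => ∫ x in (-L)..L, (L * evenTerm a q L k x + oddTerm a q L k x))
      (ML a 1 (q * (2 * L) ^ a) - 1) := by
    simp only [hint]
    simpa [ML] using hML.hasSum_even_add_odd_succ
  rw [intervalIntegral.integral_congr_Ioo_of_le (by linarith) hpair,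
    intervalIntegral_tsum_of_nonneg (by linarith)
      (fun k => (intervalIntegrable_evenTerm ha hL k).add (intervalIntegrable_oddTerm ha hL k))
      (fun k x hx => add_nonneg
        (mul_nonneg hL.le (evenTerm_nonneg ha hq k (Ioc_subset_Icc_self hx)))
        (oddTerm_nonneg hq k (Ioc_subset_Icc_self hx))) hsum.summable, hsum.tsum_eq]

end TelegraphDensity

theorem stmt8 (a lam c t : ℝ) (ha : 0 < a ∧ a ≤ 1) (hlam : 0 < lam) (hc : 0 < c)
    (ht : 0 < t) (p : ℝ → ℝ)
    (hp : ∀ x : ℝ, p x =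
      c * t * (∑' k : ℕ, (lam / ((2:ℝ) ^ a * c ^ a)) ^ (2 * (k + 1)) *
          (c ^ 2 * t ^ 2 - x ^ 2) ^ (a * ((k : ℝ) + 1) - 1) /
          (Real.Gamma (a * ((k : ℝ) + 1)) * Real.Gamma (a * ((k : ℝ) + 1) + 1)))
      + ∑' k : ℕ, (lam / ((2:ℝ) ^ a * c ^ a)) ^ (2 * k + 1) *
          (c ^ 2 * t ^ 2 - x ^ 2) ^ (a * (k : ℝ) + (a - 1) / 2) /
          Real.Gamma (a * (k : ℝ) + (1 + a) / 2) ^ 2) :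
    (∫ x in (-(c * t))..(c * t), p x) = ML a 1 (lam * t ^ a) - 1 ∧
    (∫ x in (-(c * t))..(c * t), p x / ML a 1 (lam * t ^ a))
      + 2 * (1 / (2 * ML a 1 (lam * t ^ a))) = 1 := by
  obtain ⟨ha, ha1⟩ := ha
  have hp' : p = telegraphDensity a (lam / (2 ^ a * c ^ a)) (c * t) := by
    funext x
    rw [hp x, ← mul_pow]
    rfl
  have hz : lam * t ^ a = lam / (2 ^ a * c ^ a) * (2 * (c * t)) ^ a := by
    rw [mul_rpow (by norm_num) (by positivity), mul_rpow hc.le ht.le]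
    field_simp
  have hint : ∫ x in (-(c * t))..(c * t), p x = ML a 1 (lam * t ^ a) - 1 := by
    rw [hp', hz]
    exact integral_telegraphDensity ha ha1 (by positivity) (by positivity)
  have hM := (one_le_ML ha ha1 (by positivity : 0 ≤ lam * t ^ a)).trans_lt' one_pos |>.ne'
  refine ⟨hint, ?_⟩
  rw [intervalIntegral.integral_div, hint]
  field_simp
  ring
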